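/- arXiv:2408.09102 — 5 statements merged into one kernel-verified Lean document; each statement's English description precedes it below -/
import Mathlib

section
/- For every t ∈ ℂ with t(2t+1) ≠ 0, the only point (Z₀,Z₁,Z₂) ∈ ℂ³ at which g_t and all three partial derivatives ∂g_t/∂Z₀, ∂g_t/∂Z₁, ∂g_t/∂Z₂ vanish simultaneously is (0,0,0). (Thus the plane quartic curve C_t defined by g_t = 0 in ℙ² is smooth.) -/
/-!
Write `g_t = Z₂⁴ − Z₀ ℓ q` with `ℓ = 2Z₁ + tZ₀` and `q = 2Z₁² − 2Z₁Z₀ − tZ₀²`. At a singular point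
`∂g/∂Z₂ = 4Z₂³` forces `Z₂ = 0`, so `Z₀ ℓ q = 0` and `∂g/∂Z₁ = −2Z₀(q + ℓ(2Z₁ − Z₀)) = 0`.
If `Z₀ ≠ 0` then `ℓ q = 0` and `q + ℓ(2Z₁ − Z₀) = 0`, so either `ℓ = q = 0`, impossible since
`q = t²Z₀²/2` on `ℓ = 0`, or `q = 0` and `2Z₁ = Z₀`, impossible since then `q = −(2t+1)Z₀²/2`.
Hence `Z₀ = 0`, and then `∂g/∂Z₀ = −ℓ q = −4Z₁³` forces `Z₁ = 0`.
-/

/-- The quartic form `g_t(Z₀,Z₁,Z₂) = Z₂⁴ − Z₀(2Z₁+tZ₀)(2Z₁²−2Z₁Z₀−tZ₀²)`. -/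
noncomputable def gForm (t Z₀ Z₁ Z₂ : ℂ) : ℂ :=
  Z₂ ^ 4 - Z₀ * (2 * Z₁ + t * Z₀) * (2 * Z₁ ^ 2 - 2 * Z₁ * Z₀ - t * Z₀ ^ 2)

def linFactor (t Z₀ Z₁ : ℂ) : ℂ := 2 * Z₁ + t * Z₀

def quadFactor (t Z₀ Z₁ : ℂ) : ℂ := 2 * Z₁ ^ 2 - 2 * Z₁ * Z₀ - t * Z₀ ^ 2

section Factors

variable {t Z₀ Z₁ : ℂ}

theorem quadFactor_ne_zero_of_linFactor_eq_zero (ht : t ≠ 0) (hZ₀ : Z₀ ≠ 0)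
    (hℓ : linFactor t Z₀ Z₁ = 0) : quadFactor t Z₀ Z₁ ≠ 0 := by
  intro hq
  have : t ^ 2 * Z₀ ^ 2 = 0 := by
    unfold linFactor quadFactor at *
    linear_combination 2 * hq + (t * Z₀ - 2 * Z₁ + 2 * Z₀) * hℓ
  simp_all

theorem quadFactor_ne_zero_of_two_mul_eq (ht : 2 * t + 1 ≠ 0) (hZ₀ : Z₀ ≠ 0)
    (hZ₁ : 2 * Z₁ = Z₀) : quadFactor t Z₀ Z₁ ≠ 0 := by
  intro hq
  have : (2 * t + 1) * Z₀ ^ 2 = 0 := by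
    unfold quadFactor at hq
    linear_combination -2 * hq + (2 * Z₁ - Z₀) * hZ₁
  simp_all

theorem eq_zero_of_mul_linFactor_mul_quadFactor_eq_zero (ht₀ : t ≠ 0) (ht₁ : 2 * t + 1 ≠ 0)
    (hg : Z₀ * linFactor t Z₀ Z₁ * quadFactor t Z₀ Z₁ = 0)
    (hg₁ : Z₀ * (quadFactor t Z₀ Z₁ + linFactor t Z₀ Z₁ * (2 * Z₁ - Z₀)) = 0) : Z₀ = 0 := by
  by_contra hZ₀
  rw [mul_assoc, mul_eq_zero, or_iff_right hZ₀, mul_eq_zero] at hg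
  rw [mul_eq_zero, or_iff_right hZ₀] at hg₁
  rcases hg with hℓ | hq
  · rw [hℓ, zero_mul, add_zero] at hg₁
    exact quadFactor_ne_zero_of_linFactor_eq_zero ht₀ hZ₀ hℓ hg₁
  · rw [hq, zero_add, mul_eq_zero, sub_eq_zero] at hg₁
    rcases hg₁ with hℓ | hZ₁
    · exact quadFactor_ne_zero_of_linFactor_eq_zero ht₀ hZ₀ hℓ hq
    · exact quadFactor_ne_zero_of_two_mul_eq ht₁ hZ₀ hZ₁ hq

end Factors

section Partials

variable (t Z₀ Z₁ Z₂ : ℂ)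

theorem gForm_eq : gForm t Z₀ Z₁ Z₂ = Z₂ ^ 4 - Z₀ * linFactor t Z₀ Z₁ * quadFactor t Z₀ Z₁ :=
  rfl

theorem deriv_gForm_fst : deriv (fun z => gForm t z Z₁ Z₂) Z₀ =
    -(linFactor t Z₀ Z₁ * quadFactor t Z₀ Z₁ + Z₀ * (t * quadFactor t Z₀ Z₁ -
      linFactor t Z₀ Z₁ * (2 * Z₁ + 2 * t * Z₀))) := by
  simp (disch := fun_prop) [gForm, linFactor, quadFactor]
  ring

theorem deriv_gForm_snd : deriv (fun z => gForm t Z₀ z Z₂) Z₁ =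
    -2 * (Z₀ * (quadFactor t Z₀ Z₁ + linFactor t Z₀ Z₁ * (2 * Z₁ - Z₀))) := by
  simp (disch := fun_prop) [gForm, linFactor, quadFactor]
  ring

theorem deriv_gForm_thd : deriv (fun z => gForm t Z₀ Z₁ z) Z₂ = 4 * Z₂ ^ 3 := by
  simp [gForm]

end Partials

/-- For `t(2t+1) ≠ 0`, if `g_t` and all its partial derivatives vanish at
`(Z₀,Z₁,Z₂) ∈ ℂ³`, then `(Z₀,Z₁,Z₂) = (0,0,0)`; i.e. the plane quartic `C_t` is smooth. -/
theorem stmt2 (t : ℂ) (ht : t * (2 * t + 1) ≠ 0) (Z₀ Z₁ Z₂ : ℂ)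
    (h : gForm t Z₀ Z₁ Z₂ = 0)
    (h0 : deriv (fun z => gForm t z Z₁ Z₂) Z₀ = 0)
    (h1 : deriv (fun z => gForm t Z₀ z Z₂) Z₁ = 0)
    (h2 : deriv (fun z => gForm t Z₀ Z₁ z) Z₂ = 0) :
    Z₀ = 0 ∧ Z₁ = 0 ∧ Z₂ = 0 := by
  obtain ⟨ht₀, ht₁⟩ := mul_ne_zero_iff.mp ht
  have hZ₂ : Z₂ = 0 := by simpa [deriv_gForm_thd] using h2
  subst hZ₂
  have hZ₀ : Z₀ = 0 := by
    refine eq_zero_of_mul_linFactor_mul_quadFactor_eq_zero (Z₁ := Z₁) ht₀ ht₁ ?_ ?_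
    · simpa [gForm_eq] using h
    · simpa [deriv_gForm_snd] using h1
  subst hZ₀
  have hZ₁ : Z₁ ^ 3 = 0 := by
    rw [deriv_gForm_fst] at h0
    simp only [linFactor, quadFactor] at h0
    linear_combination -h0 / 4
  exact ⟨rfl, pow_eq_zero_iff three_ne_zero |>.mp hZ₁, rfl⟩
end

section
/- For every t ∈ ℂ with t(2t+1) ≠ 0, the only point (Z₀,Z₁,Z₂,W) ∈ ℂ⁴ at which the quartic form F_t(Z₀,Z₁,Z₂,W) = W⁴ − g_t(Z₀,Z₁,Z₂) and all four of its partial derivatives vanish simultaneously is (0,0,0,0). (Thus the quartic surface X_t defined by W⁴ = g_t(Z₀,Z₁,Z₂) in ℙ³ is smooth.) -/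
/-- The quartic form `F_t(Z₀,Z₁,Z₂,W) = W⁴ − g_t(Z₀,Z₁,Z₂)` defining `X_t ⊂ ℙ³`. -/
noncomputable def FForm (t Z₀ Z₁ Z₂ W : ℂ) : ℂ :=
  W ^ 4 - gForm t Z₀ Z₁ Z₂

lemma quartic_hasDerivAt (a b c d e x : ℂ) :
    HasDerivAt (fun z : ℂ => a * z ^ 4 + b * z ^ 3 + c * z ^ 2 + d * z + e)
      (4 * a * x ^ 3 + 3 * b * x ^ 2 + 2 * c * x + d) x := by
  have H : HasDerivAt (fun z : ℂ => a * z ^ 4 + b * z ^ 3 + c * z ^ 2 + d * z + e)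
      (a * (↑4 * x ^ 3) + b * (↑3 * x ^ 2) + c * (↑2 * x ^ 1) + d * 1) x := by
    exact (((((hasDerivAt_pow 4 x).const_mul a).add
      ((hasDerivAt_pow 3 x).const_mul b)).add
      ((hasDerivAt_pow 2 x).const_mul c)).add
      ((hasDerivAt_id x).const_mul d)).add_const e
  convert H using 1
  ring

lemma quartic_deriv (a b c d e x : ℂ) :
    deriv (fun z : ℂ => a * z ^ 4 + b * z ^ 3 + c * z ^ 2 + d * z + e) x
      = 4 * a * x ^ 3 + 3 * b * x ^ 2 + 2 * c * x + d :=
  (quartic_hasDerivAt a b c d e x).deriv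

/-- For `t(2t+1) ≠ 0`, if `F_t` and all four of its partial derivatives vanish at
`(Z₀,Z₁,Z₂,W) ∈ ℂ⁴`, then `(Z₀,Z₁,Z₂,W) = (0,0,0,0)`; i.e. the quartic surface
`X_t : W⁴ = g_t` is smooth. -/
theorem stmt3 (t : ℂ) (ht : t * (2 * t + 1) ≠ 0) (Z₀ Z₁ Z₂ W : ℂ)
    (h : FForm t Z₀ Z₁ Z₂ W = 0)
    (h0 : deriv (fun z => FForm t z Z₁ Z₂ W) Z₀ = 0)
    (h1 : deriv (fun z => FForm t Z₀ z Z₂ W) Z₁ = 0)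
    (h2 : deriv (fun z => FForm t Z₀ Z₁ z W) Z₂ = 0)
    (h3 : deriv (fun z => FForm t Z₀ Z₁ Z₂ z) W = 0) :
    Z₀ = 0 ∧ Z₁ = 0 ∧ Z₂ = 0 ∧ W = 0 := by
  have ht0 : t ≠ 0 := left_ne_zero_of_mul ht
  have ht1 : 2 * t + 1 ≠ 0 := right_ne_zero_of_mul ht
  -- rewrite the four derivatives explicitly
  rw [show (fun z => FForm t z Z₁ Z₂ W)
      = fun z : ℂ => (-t ^ 2) * z ^ 4 + (-4 * t * Z₁) * z ^ 3
        + ((2 * t - 4) * Z₁ ^ 2) * z ^ 2 + (4 * Z₁ ^ 3) * z + (W ^ 4 - Z₂ ^ 4) from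
      funext fun z => by unfold FForm gForm; ring, quartic_deriv] at h0
  rw [show (fun z => FForm t Z₀ z Z₂ W)
      = fun z : ℂ => (0 : ℂ) * z ^ 4 + (4 * Z₀) * z ^ 3 + ((2 * t - 4) * Z₀ ^ 2) * z ^ 2
        + (-4 * t * Z₀ ^ 3) * z + (W ^ 4 - Z₂ ^ 4 - t ^ 2 * Z₀ ^ 4) from
      funext fun z => by unfold FForm gForm; ring, quartic_deriv] at h1
  rw [show (fun z => FForm t Z₀ Z₁ z W)
      = fun z : ℂ => (-1 : ℂ) * z ^ 4 + (0 : ℂ) * z ^ 3 + (0 : ℂ) * z ^ 2 + (0 : ℂ) * z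
        + (W ^ 4 + Z₀ * (2 * Z₁ + t * Z₀) * (2 * Z₁ ^ 2 - 2 * Z₁ * Z₀ - t * Z₀ ^ 2)) from
      funext fun z => by unfold FForm gForm; ring, quartic_deriv] at h2
  rw [show (fun z => FForm t Z₀ Z₁ Z₂ z)
      = fun z : ℂ => (1 : ℂ) * z ^ 4 + (0 : ℂ) * z ^ 3 + (0 : ℂ) * z ^ 2 + (0 : ℂ) * z
        + (-gForm t Z₀ Z₁ Z₂) from
      funext fun z => by unfold FForm; ring, quartic_deriv] at h3
  have hW : W = 0 := by
    have : W ^ 3 = 0 := by linear_combination h3 / 4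
    exact pow_eq_zero_iff (by norm_num) |>.1 this
  have hZ2 : Z₂ = 0 := by
    have : Z₂ ^ 3 = 0 := by linear_combination (-h2) / 4
    exact pow_eq_zero_iff (by norm_num) |>.1 this
  have hZ0 : Z₀ = 0 := by
    have key : 9 * t ^ 4 * (2 * t + 1) * Z₀ ^ 5 = 0 := by
      linear_combination
        (-(9 : ℂ) / 4 * Z₀ * (6 * (t ^ 2 + 8 * t + 4) * Z₁
          + (2 * t ^ 3 - 9 * t ^ 2 - 36 * t - 16) * Z₀)) * h0
        + (((6 * (t ^ 2 + 8 * t + 4) * Z₁ + (2 * t ^ 3 - 9 * t ^ 2 - 36 * t - 16) * Z₀)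
            * (3 * Z₁ + 2 * (t - 2) * Z₀)
            - 4 * (t ^ 2 + 8 * t + 4) ^ 2 * Z₀ ^ 2) / 4) * h1
    have h9 : (9 : ℂ) * t ^ 4 * (2 * t + 1) ≠ 0 := by
      exact mul_ne_zero (mul_ne_zero (by norm_num) (pow_ne_zero _ ht0)) ht1
    have : Z₀ ^ 5 = 0 := by
      rcases mul_eq_zero.1 key with hk | hk
      · exact absurd hk h9
      · exact hk
    exact pow_eq_zero_iff (by norm_num) |>.1 this
  have hZ1 : Z₁ = 0 := by
    have : Z₁ ^ 3 = 0 := by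
      subst hZ0
      linear_combination h0 / 4
    exact pow_eq_zero_iff (by norm_num) |>.1 this
  exact ⟨hZ0, hZ1, hZ2, hW⟩
end

section
/- Let t ∈ ℂ and let V₀, V₁, V₂, U₀, U₁, U₂ ∈ ℂ satisfy g_t(V₀,V₁,V₂) = 0 and U₂⁴ = U₁⁴ − U₀⁴. Then (U₂V₂)⁴ = g_t(U₀V₀, U₀V₁, U₁V₂). (This is the algebraic identity underlying the rational map φ : C_t × F ⇢ X_t, ([V₀:V₁:V₂],[U₀:U₁:U₂]) ↦ [U₀V₀ : U₀V₁ : U₁V₂ : U₂V₂], from the product of the quartic C_t and the Fermat quartic F to the quartic surface X_t : W⁴ = g_t(Z₀,Z₁,Z₂).) -/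
/-- The algebraic identity underlying the rational map
`φ : C_t × F ⇢ X_t`, `([V₀:V₁:V₂],[U₀:U₁:U₂]) ↦ [U₀V₀ : U₀V₁ : U₁V₂ : U₂V₂]`. -/
theorem stmt4 (t V₀ V₁ V₂ U₀ U₁ U₂ : ℂ)
    (hC : gForm t V₀ V₁ V₂ = 0) (hF : U₂ ^ 4 = U₁ ^ 4 - U₀ ^ 4) :
    (U₂ * V₂) ^ 4 = gForm t (U₀ * V₀) (U₀ * V₁) (U₁ * V₂) := by
  unfold gForm at hC ⊢
  linear_combination V₂ ^ 4 * hF - U₀ ^ 4 * hC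
end

section
/- Let t > 0 be real, set α = (1 + √(1+2t))/2, and let z₁, z₂ be real with 0 < z₁ < α and z₂ > 0. Define x = 2z₁²/(2z₁+t) and p = z₂⁴/(z₂⁴ − f_t(z₁)). Then 0 < x < 1, 0 < p < 1, and the Jacobian identity (4z₁(z₁+t)/(2z₁+t)²) · (−4z₂³ f_t(z₁)/(z₂⁴−f_t(z₁))²) · 1/(8 x^{1/2}(1−x)^{1/2}(x+2t)^{1/2} p^{3/4}(1−p)^{1/2}) = 1/(z₂⁴−f_t(z₁))^{3/4} holds, where all fractional powers are the real positive ones. (This is the pointwise form of the pull-back identity τ*(dx∧dp/(8x^{1/2}(1−x)^{1/2}(x+2t)^{1/2}p^{3/4}(1−p)^{1/2})) = dz₁∧dz₂/(z₂⁴−f_t(z₁))^{3/4} for the map τ(z₁,z₂) = (2z₁²/(2z₁+t), z₂⁴/(z₂⁴−f_t(z₁))).) -/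
/-!
Write `A = 2z₁ + t` and `B = 2z₁² - 2z₁ - t`, so `f = A B`; the bound `z₁ < α` says that `z₁` lies
below the positive root of `B`, hence `f < 0`. Since `1 - x = -B / A` and `x + 2t = 2(z₁ + t)² / A`,
the product `x (1 - x) (x + 2t)` is a square times `-f`, and `1 - p = -f / (z₂⁴ - f)`. So every
square root in the Jacobian becomes rational in `z₁`, `z₂`, `√(-f)`, and the identity reduces to
`(S^{3/4})² √S = S²` for `S = z₂⁴ - f`.
-/

open Real

namespace CubicPullback

lemma two_mul_sq_sub_two_mul_sub_neg {t z : ℝ} (ht : 0 ≤ t) (hz : 0 < z)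
    (hzα : z < (1 + √(1 + 2 * t)) / 2) : 2 * z ^ 2 - 2 * z - t < 0 := by
  have hroot : 1 ≤ √(1 + 2 * t) := one_le_sqrt.mpr (by linarith)
  have hsq : (2 * z - 1) ^ 2 < √(1 + 2 * t) ^ 2 := sq_lt_sq' (by linarith) (by linarith)
  rw [sq_sqrt (by linarith)] at hsq
  linarith

lemma sqrt_mul_one_sub_mul_add {t z x : ℝ} (ht : 0 ≤ t) (hz : 0 < z)
    (hx : x = 2 * z ^ 2 / (2 * z + t)) :
    √(x * (1 - x) * (x + 2 * t)) =
      2 * z * (z + t) / (2 * z + t) ^ 2 * √(-((2 * z + t) * (2 * z ^ 2 - 2 * z - t))) := by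
  have hA : 0 < 2 * z + t := by linarith
  have hprod : x * (1 - x) * (x + 2 * t) =
      (2 * z * (z + t) / (2 * z + t) ^ 2) ^ 2 * -((2 * z + t) * (2 * z ^ 2 - 2 * z - t)) := by
    rw [hx]
    field_simp
    ring
  rw [hprod, sqrt_mul (sq_nonneg _), sqrt_sq (by positivity)]

lemma pow_four_rpow_three_quarters {w : ℝ} (hw : 0 ≤ w) : (w ^ 4) ^ ((3 : ℝ) / 4) = w ^ 3 := by
  rw [← rpow_natCast, ← rpow_mul hw]
  norm_num

lemma rpow_three_quarters_sq_mul_sqrt {s : ℝ} (hs : 0 ≤ s) :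
    (s ^ ((3 : ℝ) / 4)) ^ 2 * √s = s ^ 2 := by
  rw [sqrt_eq_rpow, ← rpow_natCast, ← rpow_mul hs, ← rpow_add' hs (by norm_num)]
  norm_num

lemma one_sub_div_sub {a c : ℝ} (h : a - c ≠ 0) : 1 - a / (a - c) = -c / (a - c) := by
  field_simp
  ring

end CubicPullback

open CubicPullback in
/-- The pointwise form of the pull-back identity
`τ*(dx∧dp/(8x^{1/2}(1−x)^{1/2}(x+2t)^{1/2}p^{3/4}(1−p)^{1/2})) = dz₁∧dz₂/(z₂⁴−f_t(z₁))^{3/4}`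
for `τ(z₁,z₂) = (2z₁²/(2z₁+t), z₂⁴/(z₂⁴−f_t(z₁)))`, with `f_t(z) = (2z+t)(2z²−2z−t)`. -/
theorem stmt9 (t α z₁ z₂ f x p : ℝ) (ht : 0 < t)
    (hα : α = (1 + Real.sqrt (1 + 2 * t)) / 2)
    (h1 : 0 < z₁) (h2 : z₁ < α) (h3 : 0 < z₂)
    (hf : f = (2 * z₁ + t) * (2 * z₁ ^ 2 - 2 * z₁ - t))
    (hx : x = 2 * z₁ ^ 2 / (2 * z₁ + t))
    (hp : p = z₂ ^ 4 / (z₂ ^ 4 - f)) :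
    (0 < x ∧ x < 1) ∧ (0 < p ∧ p < 1) ∧
    (4 * z₁ * (z₁ + t) / (2 * z₁ + t) ^ 2) *
      (-4 * z₂ ^ 3 * f / (z₂ ^ 4 - f) ^ 2) *
      (1 / (8 * x ^ ((1:ℝ)/2) * (1 - x) ^ ((1:ℝ)/2) * (x + 2 * t) ^ ((1:ℝ)/2) *
        p ^ ((3:ℝ)/4) * (1 - p) ^ ((1:ℝ)/2))) =
      1 / (z₂ ^ 4 - f) ^ ((3:ℝ)/4) := by
  have hA : 0 < 2 * z₁ + t := by linarith
  have hf_neg : f < 0 := hf ▸ mul_neg_of_pos_of_neg hA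
    (two_mul_sq_sub_two_mul_sub_neg ht.le h1 (hα ▸ h2))
  have hS : 0 < z₂ ^ 4 - f := by nlinarith [pow_pos h3 4]
  have hx0 : 0 < x := by rw [hx]; positivity
  have hx1 : x < 1 := by rw [hx, div_lt_one hA]; nlinarith
  have hp1 : p < 1 := by rw [hp, div_lt_one hS]; linarith
  refine ⟨⟨hx0, hx1⟩, ⟨by rw [hp]; positivity, hp1⟩, ?_⟩
  have hsqrt_x : √x * √(1 - x) * √(x + 2 * t) =
      2 * z₁ * (z₁ + t) / (2 * z₁ + t) ^ 2 * √(-f) := by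
    rw [← sqrt_mul hx0.le, ← sqrt_mul (by nlinarith), hf, sqrt_mul_one_sub_mul_add ht.le h1 hx]
  have hp_rpow : p ^ ((3:ℝ)/4) = z₂ ^ 3 / (z₂ ^ 4 - f) ^ ((3:ℝ)/4) := by
    rw [hp, div_rpow (by positivity) hS.le, pow_four_rpow_three_quarters h3.le]
  have hsqrt_p : √(1 - p) = √(-f) / √(z₂ ^ 4 - f) := by
    rw [hp, one_sub_div_sub hS.ne', sqrt_div' _ hS.le]
  simp only [← sqrt_eq_rpow]
  rw [mul_assoc 8, mul_assoc 8, hsqrt_x, hp_rpow, hsqrt_p]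
  have hf_sqrt_sq := sq_sqrt (neg_nonneg.mpr hf_neg.le)
  have hS_rpow := rpow_three_quarters_sq_mul_sqrt hS.le
  have hsqrt_f : 0 < √(-f) := sqrt_pos.mpr (by linarith)
  have hsqrt_S : 0 < √(z₂ ^ 4 - f) := sqrt_pos.mpr hS
  field_simp
  linear_combination (-16 * f) * hS_rpow - 16 * (z₂ ^ 4 - f) ^ 2 * hf_sqrt_sq
end

section
/- For all real t > 0 and real x > 1, the function u(x,t) = (x(x−1)(x+2t))^{−1/2} satisfies 𝒟_t(u)(x,t) = ∂/∂x ( (x(x−1))^{1/2} / (2(x+2t)^{3/2}) ), where 𝒟_t acts in the variable t: 𝒟_t(u) = −(1/2)t(1+2t) ∂²u/∂t² − (1/2)(1+4t) ∂u/∂t − (1/4)u, and all fractional powers are the positive real ones. -/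
/-!
With `c = x(x-1)` and `P = x + 2t`, the function `u = c^{-1/2} P^{-1/2}` is a constant times a power
of an affine function of `t`, so its `t`-derivatives are explicit powers of `P`. Both sides of the
identity are then `c^{-1/2} P^{-5/2}` times a polynomial in `x` and `t`, and the two polynomials agree.
-/

open Real Filter Topology

lemma eventually_pos_affine {a b r : ℝ} (hr : 0 < a + b * r) : ∀ᶠ s in 𝓝 r, 0 < a + b * s :=
  (continuous_const.add (continuous_const.mul continuous_id)).continuousAt.eventually
    (lt_mem_nhds hr)

lemma hasDerivAt_affine_rpow {a b p r : ℝ} (h : a + b * r ≠ 0) :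
    HasDerivAt (fun s => (a + b * s) ^ p) (p * b * (a + b * r) ^ (p - 1)) r := by
  have h' := (((hasDerivAt_id' r).const_mul b).const_add a).rpow_const (p := p) (Or.inl h)
  convert h' using 1
  ring

lemma deriv_mul_affine_rpow {c a b p r : ℝ} (hc : 0 ≤ c) (hr : 0 < a + b * r) :
    deriv (fun s => (c * (a + b * s)) ^ p) r = p * b * c ^ p * (a + b * r) ^ (p - 1) := by
  have hsplit : (fun s => (c * (a + b * s)) ^ p) =ᶠ[𝓝 r] fun s => c ^ p * (a + b * s) ^ p :=
    (eventually_pos_affine hr).mono fun s hs => mul_rpow hc hs.le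
  rw [hsplit.deriv_eq, ((hasDerivAt_affine_rpow hr.ne').const_mul _).deriv]
  ring

lemma deriv_deriv_mul_affine_rpow {c a b p r : ℝ} (hc : 0 ≤ c) (hr : 0 < a + b * r) :
    deriv (fun s => deriv (fun s => (c * (a + b * s)) ^ p) s) r
      = p * (p - 1) * b ^ 2 * c ^ p * (a + b * r) ^ (p - 2) := by
  have hfirst : deriv (fun s => (c * (a + b * s)) ^ p)
      =ᶠ[𝓝 r] fun s => p * b * c ^ p * (a + b * s) ^ (p - 1) :=
    (eventually_pos_affine hr).mono fun s hs => deriv_mul_affine_rpow hc hs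
  rw [hfirst.deriv_eq, ((hasDerivAt_affine_rpow hr.ne').const_mul _).deriv,
    show p - 1 - 1 = p - 2 by ring]
  ring

lemma hasDerivAt_rpow_half_div_rpow_three_halves {t x : ℝ} (hc : 0 < x * (x - 1)) (hP : 0 < x + 2 * t) :
    HasDerivAt (fun y : ℝ => (y * (y - 1)) ^ ((1:ℝ)/2) / (2 * (y + 2 * t) ^ ((3:ℝ)/2)))
      ((x * (x - 1)) ^ (-(1/2) : ℝ) * (x + 2 * t) ^ (-(5/2) : ℝ)
        * ((2 * x - 1) * (x + 2 * t) - 3 * (x * (x - 1))) / 4) x := by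
  have hprod : (fun y : ℝ => (y * (y - 1)) ^ ((1:ℝ)/2) / (2 * (y + 2 * t) ^ ((3:ℝ)/2)))
      =ᶠ[𝓝 x] fun y => (y * (y - 1)) ^ ((1:ℝ)/2) * (y + 2 * t) ^ (-((3:ℝ)/2)) / 2 := by
    filter_upwards [(continuous_add_const (2 * t)).continuousAt.eventually (lt_mem_nhds hP)]
      with y hy
    rw [rpow_neg hy.le]
    ring
  have hnum : HasDerivAt (fun y : ℝ => (y * (y - 1)) ^ ((1:ℝ)/2))
      ((2 * x - 1) / 2 * (x * (x - 1)) ^ ((1:ℝ)/2 - 1)) x := by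
    convert ((hasDerivAt_id' x).fun_mul ((hasDerivAt_id' x).sub_const 1)).rpow_const
      (p := (1:ℝ)/2) (Or.inl hc.ne') using 1
    ring
  have hden : HasDerivAt (fun y : ℝ => (y + 2 * t) ^ (-((3:ℝ)/2)))
      (-(3/2) * (x + 2 * t) ^ (-((3:ℝ)/2) - 1)) x := by
    convert ((hasDerivAt_id' x).add_const (2 * t)).rpow_const
      (p := -((3:ℝ)/2)) (Or.inl hP.ne') using 1
    ring
  refine (((hnum.mul hden).div_const 2).congr_of_eventuallyEq hprod).congr_deriv ?_
  have ec : (x * (x - 1)) ^ ((1:ℝ)/2) = (x * (x - 1)) ^ (-(1/2) : ℝ) * (x * (x - 1)) := by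
    rw [← rpow_add_one hc.ne']; norm_num
  have ec' : (x * (x - 1)) ^ ((1:ℝ)/2 - 1) = (x * (x - 1)) ^ (-(1/2) : ℝ) := by norm_num
  have eP : (x + 2 * t) ^ (-((3:ℝ)/2)) = (x + 2 * t) ^ (-(5/2) : ℝ) * (x + 2 * t) := by
    rw [← rpow_add_one hP.ne']; norm_num
  have eP' : (x + 2 * t) ^ (-((3:ℝ)/2) - 1) = (x + 2 * t) ^ (-(5/2) : ℝ) := by norm_num
  rw [ec, ec', eP, eP']
  ring

/-- For `t > 0` and `x > 1`, the function `u(x,t) = (x(x−1)(x+2t))^{−1/2}` satisfies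
`𝒟_t(u) = ∂/∂x ((x(x−1))^{1/2}/(2(x+2t)^{3/2}))`, where
`𝒟_t = −(1/2)t(1+2t)∂²/∂t² − (1/2)(1+4t)∂/∂t − 1/4` acts in the variable `t`. -/
theorem stmt12 (t x : ℝ) (ht : 0 < t) (hx : 1 < x) :
    -(1/2) * t * (1 + 2 * t) *
        deriv (fun s : ℝ => deriv (fun r : ℝ => (x * (x - 1) * (x + 2 * r)) ^ (-(1/2) : ℝ)) s) t
      - (1/2) * (1 + 4 * t) * deriv (fun r : ℝ => (x * (x - 1) * (x + 2 * r)) ^ (-(1/2) : ℝ)) t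
      - (1/4) * (x * (x - 1) * (x + 2 * t)) ^ (-(1/2) : ℝ)
    = deriv (fun y : ℝ => (y * (y - 1)) ^ ((1:ℝ)/2) / (2 * (y + 2 * t) ^ ((3:ℝ)/2))) x := by
  have hc : 0 < x * (x - 1) := mul_pos (by linarith) (by linarith)
  have hP : 0 < x + 2 * t := by linarith
  rw [deriv_deriv_mul_affine_rpow hc.le hP, deriv_mul_affine_rpow hc.le hP,
    (hasDerivAt_rpow_half_div_rpow_three_halves hc hP).deriv, mul_rpow hc.le hP.le]
  have e2 : (x + 2 * t) ^ (-(1/2) - 2 : ℝ) = (x + 2 * t) ^ (-(5/2) : ℝ) := by norm_num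
  have e1 : (x + 2 * t) ^ (-(1/2) - 1 : ℝ) = (x + 2 * t) ^ (-(5/2) : ℝ) * (x + 2 * t) := by
    rw [← rpow_add_one hP.ne']; norm_num
  have e0 : (x + 2 * t) ^ (-(1/2) : ℝ) = (x + 2 * t) ^ (-(5/2) : ℝ) * (x + 2 * t) ^ 2 := by
    rw [← rpow_add_natCast hP.ne']; norm_num
  rw [e2, e1, e0]
  ring
end
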